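/- arXiv:1905.06724 — 2 statements merged into one kernel-verified Lean document; each statement's English description precedes it below -/
import Mathlib

section
/- For every integer r ≥ 2, the complete r-partite graph all of whose partite sets have size 3 satisfies b_dR(K_{3,3,…,3}) = 3(r − 1) + 1. -/
set_option linter.unusedSectionVars false
set_option linter.unusedVariables false
set_option maxHeartbeats 1600000



/-- A double Roman dominating function (DRDF) on a graph `G`: a function
`f : V → ℕ` taking values in `{0,1,2,3}` such that every vertex assigned `0`
has a neighbor assigned `3` or two distinct neighbors assigned `2`, and every
vertex assigned `1` has a neighbor assigned at least `2`. -/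
def IsDRDF {V : Type*} (G : SimpleGraph V) (f : V → ℕ) : Prop :=
  (∀ v, f v ≤ 3) ∧
  (∀ v, f v = 0 →
    (∃ w, G.Adj v w ∧ f w = 3) ∨
    (∃ w₁ w₂, G.Adj v w₁ ∧ G.Adj v w₂ ∧ w₁ ≠ w₂ ∧ f w₁ = 2 ∧ f w₂ = 2)) ∧
  (∀ v, f v = 1 → ∃ w, G.Adj v w ∧ 2 ≤ f w)

/-- The double Roman domination number `γ_dR(G)`: the minimum weight of a DRDF on `G`. -/
noncomputable def gammaDR {V : Type*} [Fintype V] (G : SimpleGraph V) : ℕ :=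
  sInf {k | ∃ f : V → ℕ, IsDRDF G f ∧ ∑ v, f v = k}

/-- The double Roman bondage number `b_dR(G)`: the minimum cardinality of a set
`B` of edges of `G` such that `γ_dR(G - B) > γ_dR(G)`. -/
noncomputable def bDR {V : Type*} [Fintype V] (G : SimpleGraph V) : ℕ :=
  sInf {k | ∃ B : Finset (Sym2 V), ↑B ⊆ G.edgeSet ∧ B.card = k ∧
    gammaDR G < gammaDR (G.deleteEdges ↑B)}


section Helpers
variable {V : Type*} [Fintype V] [DecidableEq V] {G : SimpleGraph V}

lemma isDRDF_const3 (G : SimpleGraph V) : IsDRDF G (fun _ => 3) :=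
  ⟨fun _ => le_refl 3, fun v h => by simp at h, fun v h => by simp at h⟩

lemma gammaDR_set_nonempty (G : SimpleGraph V) :
    {k | ∃ f : V → ℕ, IsDRDF G f ∧ ∑ v, f v = k}.Nonempty :=
  ⟨_, (fun _ => 3), isDRDF_const3 G, rfl⟩

lemma gammaDR_le {f : V → ℕ} (h : IsDRDF G f) : gammaDR G ≤ ∑ v, f v :=
  Nat.sInf_le ⟨f, h, rfl⟩

lemma le_gammaDR {n : ℕ} (h : ∀ f, IsDRDF G f → n ≤ ∑ v, f v) : n ≤ gammaDR G := by
  obtain ⟨f, hf, hw⟩ := Nat.sInf_mem (gammaDR_set_nonempty G)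
  rw [gammaDR, ← hw]; exact h f hf

lemma le_sum2 (f : V → ℕ) {a b : V} (hab : a ≠ b) : f a + f b ≤ ∑ v, f v := by
  classical
  calc f a + f b = ∑ v ∈ ({a, b} : Finset V), f v := by
        rw [Finset.sum_insert (by simp [hab]), Finset.sum_singleton]
    _ ≤ ∑ v, f v := Finset.sum_le_sum_of_subset (Finset.subset_univ _)

lemma le_sum3 (f : V → ℕ) {a b c : V} (hab : a ≠ b) (hac : a ≠ c) (hbc : b ≠ c) :
    f a + f b + f c ≤ ∑ v, f v := by
  calc f a + f b + f c = ∑ v ∈ ({a, b, c} : Finset V), f v := by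
        rw [Finset.sum_insert (by simp [hab, hac]), Finset.sum_insert (by simp [hbc]),
          Finset.sum_singleton]; ring
    _ ≤ ∑ v, f v := Finset.sum_le_sum_of_subset (Finset.subset_univ _)

lemma le_sum4 (f : V → ℕ) {a b c d : V} (hab : a ≠ b) (hac : a ≠ c) (had : a ≠ d)
    (hbc : b ≠ c) (hbd : b ≠ d) (hcd : c ≠ d) :
    f a + f b + f c + f d ≤ ∑ v, f v := by
  calc f a + f b + f c + f d = ∑ v ∈ ({a, b, c, d} : Finset V), f v := by
        rw [Finset.sum_insert (by simp [hab, hac, had]), Finset.sum_insert (by simp [hbc, hbd]),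
          Finset.sum_insert (by simp [hcd]), Finset.sum_singleton]; ring
    _ ≤ ∑ v, f v := Finset.sum_le_sum_of_subset (Finset.subset_univ _)

lemma le_sum5 (f : V → ℕ) {a b c d e : V} (hab : a ≠ b) (hac : a ≠ c) (had : a ≠ d)
    (hae : a ≠ e) (hbc : b ≠ c) (hbd : b ≠ d) (hbe : b ≠ e) (hcd : c ≠ d) (hce : c ≠ e)
    (hde : d ≠ e) :
    f a + f b + f c + f d + f e ≤ ∑ v, f v := by
  calc f a + f b + f c + f d + f e = ∑ v ∈ ({a, b, c, d, e} : Finset V), f v := by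
        rw [Finset.sum_insert (by simp [hab, hac, had, hae]),
          Finset.sum_insert (by simp [hbc, hbd, hbe]),
          Finset.sum_insert (by simp [hcd, hce]), Finset.sum_insert (by simp [hde]),
          Finset.sum_singleton]; ring
    _ ≤ ∑ v, f v := Finset.sum_le_sum_of_subset (Finset.subset_univ _)

end Helpers

abbrev Vt (r : ℕ) := (i : Fin r) × Fin 3
abbrev KG (r : ℕ) : SimpleGraph (Vt r) :=
  SimpleGraph.completeMultipartiteGraph fun _ : Fin r => Fin 3
variable {r : ℕ}
lemma adj_iff {v w : Vt r} : (KG r).Adj v w ↔ v.1 ≠ w.1 := Iff.rfl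
lemma ne_of_fst {v w : Vt r} (h : v.1 ≠ w.1) : v ≠ w :=
  fun e => h (congrArg Sigma.fst e)
lemma mk_ne_of_snd {i : Fin r} {j j' : Fin 3} (h : j ≠ j') : (⟨i,j⟩ : Vt r) ≠ ⟨i,j'⟩ := by
  intro e; exact h (by simpa [Sigma.ext_iff] using e)
lemma fin3_cases : ∀ a b : Fin 3, b = a ∨ b = a + 1 ∨ b = a + 2 := by decide
lemma same_part_cases {v w : Vt r} (h : w.1 = v.1) :
    w = v ∨ w = ⟨v.1, v.2 + 1⟩ ∨ w = ⟨v.1, v.2 + 2⟩ := by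
  have hw : w = ⟨v.1, w.2⟩ := Sigma.ext h (by simp)
  rcases fin3_cases v.2 w.2 with h2 | h2 | h2
  · left; rw [hw, h2]
  · right; left; rw [hw, h2]
  · right; right; rw [hw, h2]
lemma fin3_add : ∀ a : Fin 3, a + 1 ≠ a ∧ a + 2 ≠ a ∧ a + 1 ≠ a + 2 := by decide
lemma pm1_ne (v : Vt r) : (⟨v.1, v.2 + 1⟩ : Vt r) ≠ v := by
  conv_rhs => rw [show v = (⟨v.1, v.2⟩ : Vt r) from rfl]
  exact mk_ne_of_snd (fin3_add v.2).1
lemma pm2_ne (v : Vt r) : (⟨v.1, v.2 + 2⟩ : Vt r) ≠ v := by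
  conv_rhs => rw [show v = (⟨v.1, v.2⟩ : Vt r) from rfl]
  exact mk_ne_of_snd (fin3_add v.2).2.1
lemma pm1_ne_pm2 (v : Vt r) : (⟨v.1, v.2 + 1⟩ : Vt r) ≠ ⟨v.1, v.2 + 2⟩ :=
  mk_ne_of_snd (fin3_add v.2).2.2
lemma part_card (i : Fin r) : (Finset.univ.filter (fun v : Vt r => v.1 = i)).card = 3 := by
  rw [Finset.card_filter, ← Finset.univ_sigma_univ, Finset.sum_sigma]
  rw [Finset.sum_eq_single i] <;> simp +contextual
lemma univ_card : (Finset.univ : Finset (Vt r)).card = 3 * r := by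
  simp [Finset.card_univ, mul_comm]
lemma sum_d_eq (B : Finset (Sym2 (Vt r))) (hsub : ∀ e ∈ B, ¬ e.IsDiag) :
    ∑ v, (B.filter (fun e => v ∈ e)).card = 2 * B.card := by
  have h1 : ∀ v : Vt r, (B.filter (fun e => v ∈ e)).card = ∑ e ∈ B, if v ∈ e then 1 else 0 := by
    intro v; rw [Finset.card_filter]
  have h2 : ∀ e ∈ B, (∑ v : Vt r, if v ∈ e then 1 else 0) = 2 := by
    intro e he
    rw [← Finset.card_filter]
    induction e using Sym2.ind with
    | _ a b =>
      have hab : a ≠ b := by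
        intro h; exact hsub _ he (by simp [h])
      have : Finset.univ.filter (fun v : Vt r => v ∈ s(a, b)) = {a, b} := by
        ext v; simp [Sym2.mem_iff]
      rw [this, Finset.card_pair hab]
  rw [Finset.sum_congr rfl (fun v _ => h1 v), Finset.sum_comm,
    Finset.sum_congr rfl h2, Finset.sum_const, smul_eq_mul, mul_comm]
lemma isDRDF_fA (G' : SimpleGraph (Vt r)) (u w : Vt r) (huw : u ≠ w)
    (hcov : ∀ v, v ≠ u → v ≠ w → ∃ x, G'.Adj v x ∧ (x = u ∨ x = w)) :
    IsDRDF G' (fun v => if v = u ∨ v = w then 3 else 0) := by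
  refine ⟨fun v => by simp only []; split <;> omega, fun v hv => ?_, fun v hv => ?_⟩
  · have hvu : v ≠ u := by intro e; rw [e] at hv; simp at hv
    have hvw : v ≠ w := by intro e; rw [e] at hv; simp at hv
    obtain ⟨x, hadj, hx⟩ := hcov v hvu hvw
    exact Or.inl ⟨x, hadj, by rcases hx with h | h <;> simp [h]⟩
  · exfalso; by_cases h : v = u ∨ v = w <;> simp [h] at hv
lemma weight_fA (u w : Vt r) (h : u ≠ w) :
    ∑ v : Vt r, (if v = u ∨ v = w then 3 else 0) = 6 := by
  have he : ∀ v : Vt r, (if v = u ∨ v = w then 3 else 0) =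
      (if v = u then 3 else 0) + (if v = w then 3 else 0) := by
    intro v; by_cases h1 : v = u <;> by_cases h2 : v = w <;> simp_all
  rw [Finset.sum_congr rfl (fun v _ => he v), Finset.sum_add_distrib]
  simp [Finset.sum_ite_eq']
lemma isDRDF_fB (G' : SimpleGraph (Vt r)) (i : Fin r)
    (hcov : ∀ v : Vt r, v.1 ≠ i → ∃ j k : Fin 3, j ≠ k ∧ G'.Adj v ⟨i, j⟩ ∧ G'.Adj v ⟨i, k⟩) :
    IsDRDF G' (fun v => if v.1 = i then 2 else 0) := by
  refine ⟨fun v => by simp only []; split <;> omega, fun v hv => ?_, fun v hv => ?_⟩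
  · have hvi : v.1 ≠ i := by intro e; simp [e] at hv
    obtain ⟨j, k, hjk, haj, hak⟩ := hcov v hvi
    exact Or.inr ⟨⟨i, j⟩, ⟨i, k⟩, haj, hak, mk_ne_of_snd hjk, by simp, by simp⟩
  · exfalso; by_cases h : v.1 = i <;> simp [h] at hv
lemma weight_fB (i : Fin r) : ∑ v : Vt r, (if v.1 = i then 2 else 0) = 6 := by
  rw [← Finset.univ_sigma_univ, Finset.sum_sigma]
  rw [Finset.sum_eq_single i] <;> simp +contextual

lemma fin3_third : ∀ a b : Fin 3, a ≠ b → (-a-b ≠ a ∧ -a-b ≠ b) := by decide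
lemma eq_mk_of_fst {v : Vt r} {i : Fin r} (h : v.1 = i) : v = ⟨i, v.2⟩ :=
  Sigma.ext h (by simp)

section Core
variable {B : Finset (Sym2 (Vt r))}

lemma not_adj_del {a b : Vt r} (h : ¬ ((KG r).deleteEdges ↑B).Adj a b) :
    a.1 = b.1 ∨ s(a, b) ∈ B := by
  rw [SimpleGraph.deleteEdges_adj] at h
  by_cases hm : s(a, b) ∈ B
  · exact Or.inr hm
  · left
    by_contra hne
    exact h ⟨adj_iff.mpr hne, by simpa using hm⟩

lemma adj_del {a b : Vt r} (h1 : a.1 ≠ b.1) (h2 : s(a, b) ∉ B) :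
    ((KG r).deleteEdges ↑B).Adj a b :=
  SimpleGraph.deleteEdges_adj.mpr ⟨adj_iff.mpr h1, by simpa using h2⟩

theorem core (hr : 2 ≤ r) (B : Finset (Sym2 (Vt r))) (hsub : ↑B ⊆ (KG r).edgeSet)
    (hcard : B.card ≤ 3 * (r - 1)) :
    ∃ f : Vt r → ℕ, IsDRDF ((KG r).deleteEdges ↑B) f ∧ ∑ v, f v = 6 := by
  by_contra hcon
  set G' := (KG r).deleteEdges ↑B with hG'
  have ecross : ∀ {a b : Vt r}, s(a, b) ∈ B → a.1 ≠ b.1 := by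
    intro a b h
    exact adj_iff.mp (((KG r).mem_edgeSet).mp (hsub h))
  have hnodiag : ∀ e ∈ B, ¬ e.IsDiag := by
    intro e he
    induction e using Sym2.ind with
    | _ a b =>
      intro hdiag
      exact ecross he (by rw [Sym2.mk_isDiag_iff.mp hdiag])
  set d : Vt r → ℕ := fun v => (B.filter (fun e => v ∈ e)).card with hd
  have one_le_d : ∀ {a : Vt r} {e : Sym2 (Vt r)}, e ∈ B → a ∈ e → 1 ≤ d a := by
    intro a e he ha
    exact Finset.card_pos.mpr ⟨e, Finset.mem_filter.mpr ⟨he, ha⟩⟩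
  have two_le_d : ∀ {a : Vt r} {e1 e2 : Sym2 (Vt r)}, e1 ∈ B → e2 ∈ B → e1 ≠ e2 →
      a ∈ e1 → a ∈ e2 → 2 ≤ d a := by
    intro a e1 e2 h1 h2 hne ha1 ha2
    have hss : ({e1, e2} : Finset (Sym2 (Vt r))) ⊆ B.filter (fun e => a ∈ e) := by
      intro e he
      rcases Finset.mem_insert.mp he with h | h
      · subst h; exact Finset.mem_filter.mpr ⟨h1, ha1⟩
      · rw [Finset.mem_singleton.mp h]; exact Finset.mem_filter.mpr ⟨h2, ha2⟩
    calc 2 = ({e1, e2} : Finset (Sym2 (Vt r))).card := (Finset.card_pair hne).symm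
      _ ≤ _ := Finset.card_le_card hss
  have d_zero : ∀ {a : Vt r}, d a = 0 → ∀ {e}, e ∈ B → a ∉ e := by
    intro a h e he hm
    have := one_le_d he hm
    omega
  have hsumd : ∑ v, d v = 2 * B.card := sum_d_eq B hnodiag
  have hA : ∀ u w : Vt r, u.1 ≠ w.1 →
      ∃ v, v ≠ u ∧ v ≠ w ∧ (v.1 = u.1 ∨ s(v, u) ∈ B) ∧ (v.1 = w.1 ∨ s(v, w) ∈ B) := by
    intro u w huw
    by_contra hc
    apply hcon
    refine ⟨_, isDRDF_fA G' u w (ne_of_fst huw) ?_, weight_fA u w (ne_of_fst huw)⟩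
    intro v hvu hvw
    by_cases h1 : G'.Adj v u
    · exact ⟨u, h1, Or.inl rfl⟩
    by_cases h2 : G'.Adj v w
    · exact ⟨w, h2, Or.inr rfl⟩
    exact absurd ⟨v, hvu, hvw, not_adj_del h1, not_adj_del h2⟩ hc
  have hB : ∀ i : Fin r, ∃ w : Vt r, w.1 ≠ i ∧
      ∀ j k : Fin 3, j ≠ k → (s(w, ⟨i, j⟩) ∈ B ∨ s(w, ⟨i, k⟩) ∈ B) := by
    intro i
    by_contra hc
    push_neg at hc
    apply hcon
    refine ⟨_, isDRDF_fB G' i ?_, weight_fB i⟩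
    intro v hvi
    obtain ⟨j, k, hjk, hj, hk⟩ := hc v hvi
    exact ⟨j, k, hjk, adj_del hvi hj, adj_del hvi hk⟩
  by_cases hz0 : ∃ u : Vt r, d u = 0
  · obtain ⟨u, hu0⟩ := hz0
    by_cases hz1 : ∃ u' : Vt r, u' ≠ u ∧ d u' = 0
    · obtain ⟨u', hne, hu'0⟩ := hz1
      by_cases hsame : u'.1 = u.1
      · obtain ⟨w, hw1, hw2⟩ := hB u.1
        have hsnd : u.2 ≠ u'.2 := by
          intro e
          exact hne (Sigma.ext hsame (by rw [e]))
        rcases hw2 u.2 u'.2 (fun e => hsnd e) with h | h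
        · exact d_zero hu0 h (by simp)
        · rw [← eq_mk_of_fst hsame] at h
          exact d_zero hu'0 h (by simp)
      · obtain ⟨v, hvu, hvu', h1, h2⟩ := hA u u' (fun e => hsame e.symm)
        rcases h1 with h1 | h1
        · rcases h2 with h2 | h2
          · exact hsame (by rw [← h2]; exact h1)
          · exact d_zero hu'0 h2 (by simp)
        · exact d_zero hu0 h1 (by simp)
    · push_neg at hz1
      have hdpos : ∀ v : Vt r, v ≠ u → 1 ≤ d v := by
        intro v hv
        have := hz1 v hv
        omega
      set p : Vt r := ⟨u.1, u.2 + 1⟩ with hp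
      set q : Vt r := ⟨u.1, u.2 + 2⟩ with hq
      have hcov2 : ∀ w : Vt r, w.1 ≠ u.1 → s(w, p) ∈ B ∨ s(w, q) ∈ B := by
        intro w hw
        obtain ⟨v, hvu, hvw, h1, h2⟩ := hA u w (fun e => hw e.symm)
        rcases h1 with h1 | h1
        · have h2' : s(v, w) ∈ B := by
            rcases h2 with h2 | h2
            · exact absurd (h2.symm.trans h1) hw
            · exact h2
          rcases same_part_cases h1 with he | he | he
          · exact absurd he hvu
          · left; rw [Sym2.eq_swap]; rw [he] at h2'; exact h2'
          · right; rw [Sym2.eq_swap]; rw [he] at h2'; exact h2'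
        · exact absurd (by simp : u ∈ s(v, u)) (d_zero hu0 h1)
      obtain ⟨w, hw1, hw2⟩ := hB u.1
      have hwp : s(w, p) ∈ B := by
        rcases hw2 (u.2 + 1) u.2 (fin3_add u.2).1 with h | h
        · exact h
        · exact absurd (by simp : u ∈ s(w, ⟨u.1, u.2⟩)) (d_zero hu0 h)
      have hwq : s(w, q) ∈ B := by
        rcases hw2 (u.2 + 2) u.2 (fin3_add u.2).2.1 with h | h
        · exact h
        · exact absurd (by simp : u ∈ s(w, ⟨u.1, u.2⟩)) (d_zero hu0 h)
      have hdw2 : 2 ≤ d w := by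
        refine two_le_d hwp hwq ?_ (by simp) (by simp)
        intro e
        rcases Sym2.eq_iff.mp e with ⟨_, h⟩ | ⟨h, _⟩
        · exact pm1_ne_pm2 u h
        · exact hw1 (by rw [h])
      have hinj : (Finset.univ.filter (fun w : Vt r => ¬ w.1 = u.1)).card ≤
          (B.filter (fun e => p ∈ e ∨ q ∈ e)).card := by
        apply Finset.card_le_card_of_injOn
          (fun w => if s(w, p) ∈ B then s(w, p) else s(w, q))
        · intro w hw
          simp only [Finset.mem_coe, Finset.mem_filter, Finset.mem_univ, true_and] at hw
          by_cases h' : s(w, p) ∈ B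
          · simp only [h', if_pos]
            exact Finset.mem_filter.mpr ⟨h', Or.inl (by simp)⟩
          · simp only [h', if_neg, if_false]
            rcases hcov2 w hw with h | h
            · exact absurd h h'
            · exact Finset.mem_filter.mpr ⟨h, Or.inr (by simp)⟩
        · intro w1 hw1' w2 hw2' he
          simp only [] at he
          simp only [Finset.mem_coe, Finset.mem_filter, Finset.mem_univ, true_and] at hw1' hw2'
          have key : ∀ (h1 h2 : Vt r), h1.1 = u.1 → h2.1 = u.1 → s(w1, h1) = s(w2, h2) →
              w1 = w2 := by
            intro h1 h2 hh1 hh2 hee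
            rcases Sym2.eq_iff.mp hee with ⟨h, _⟩ | ⟨h, h'⟩
            · exact h
            · exact absurd (show w1.1 = u.1 by rw [h]; exact hh2) hw1'
          split_ifs at he with c1 c2 c2
          · exact key p p rfl rfl he
          · exact key p q rfl rfl he
          · exact key q p rfl rfl he
          · exact key q q rfl rfl he
      have hWcard : (Finset.univ.filter (fun w : Vt r => ¬ w.1 = u.1)).card = 3 * r - 3 := by
        have h1 := Finset.card_filter_add_card_filter_not
          (s := (Finset.univ : Finset (Vt r))) (p := fun w : Vt r => w.1 = u.1)
        rw [part_card u.1, univ_card] at h1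
        omega
      have hdpq : 3 * r - 3 ≤ d p + d q := by
        have hsplit : (B.filter (fun e => p ∈ e ∨ q ∈ e)).card ≤ d p + d q := by
          rw [hd]
          simp only []
          rw [Finset.filter_or]
          exact Finset.card_union_le _ _
        omega
      have htriple : ∑ v ∈ ({u, p, q} : Finset (Vt r)), d v = d u + (d p + d q) := by
        rw [Finset.sum_insert (by simp only [Finset.mem_insert, Finset.mem_singleton, not_or]; exact ⟨Ne.symm (pm1_ne u), Ne.symm (pm2_ne u)⟩),
          Finset.sum_insert (by simp only [Finset.mem_singleton]; exact pm1_ne_pm2 u), Finset.sum_singleton]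
      have hsdiff : ∑ v ∈ (Finset.univ \ ({u, p, q} : Finset (Vt r))), d v +
          ∑ v ∈ ({u, p, q} : Finset (Vt r)), d v = ∑ v, d v :=
        Finset.sum_sdiff (Finset.subset_univ _)
      have hwmem : w ∈ Finset.univ \ ({u, p, q} : Finset (Vt r)) := by
        simp only [Finset.mem_sdiff, Finset.mem_univ, true_and, Finset.mem_insert,
          Finset.mem_singleton]
        push_neg
        exact ⟨fun e => hw1 (by rw [e]), fun e => hw1 (by rw [e]),
          fun e => hw1 (by rw [e])⟩
      have hrest : 3 * r - 4 + 2 ≤ ∑ v ∈ (Finset.univ \ ({u, p, q} : Finset (Vt r))), d v := by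
        rw [← Finset.add_sum_erase _ (fun v => d v) hwmem]
        have hcard' : ((Finset.univ \ ({u, p, q} : Finset (Vt r))).erase w).card = 3 * r - 4 := by
          rw [Finset.card_erase_of_mem hwmem, Finset.card_sdiff_of_subset (Finset.subset_univ _),
            univ_card]
          have h3 : ({u, p, q} : Finset (Vt r)).card = 3 := by
            rw [Finset.card_insert_of_notMem (by simp only [Finset.mem_insert, Finset.mem_singleton, not_or]; exact ⟨Ne.symm (pm1_ne u), Ne.symm (pm2_ne u)⟩),
              Finset.card_insert_of_notMem (by simp only [Finset.mem_singleton]; exact pm1_ne_pm2 u), Finset.card_singleton]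
          omega
        have hge : ∀ v ∈ (Finset.univ \ ({u, p, q} : Finset (Vt r))).erase w, 1 ≤ d v := by
          intro v hv
          apply hdpos
          have hv2 := Finset.mem_sdiff.mp (Finset.mem_of_mem_erase hv)
          simp only [Finset.mem_insert, Finset.mem_singleton] at hv2
          tauto
        have hns := Finset.card_nsmul_le_sum _ (fun v => d v) 1 hge
        rw [hcard'] at hns
        simp only [smul_eq_mul, mul_one] at hns
        omega
      have hdu : d u = 0 := hu0
      omega
  · push_neg at hz0
    have hdpos : ∀ v : Vt r, 1 ≤ d v := fun v => by have := hz0 v; omega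
    have hone : ∃ u : Vt r, d u = 1 := by
      by_contra hc
      push_neg at hc
      have h2 : ∀ v : Vt r, v ∈ Finset.univ → 2 ≤ d v := by
        intro v _
        have := hdpos v; have := hc v; omega
      have hns := Finset.card_nsmul_le_sum _ (fun v => d v) 2 h2
      rw [univ_card] at hns
      simp only [smul_eq_mul] at hns
      omega
    obtain ⟨u, hu1⟩ := hone
    obtain ⟨e0, he0⟩ := Finset.card_eq_one.mp hu1
    have he0B : e0 ∈ B ∧ u ∈ e0 := by
      have : e0 ∈ B.filter (fun e => u ∈ e) := by rw [he0]; simp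
      simpa using this
    have hue : ∀ e ∈ B, u ∈ e → e = e0 := by
      intro e he hm
      have : e ∈ B.filter (fun e => u ∈ e) := Finset.mem_filter.mpr ⟨he, hm⟩
      rw [he0] at this
      simpa using this
    set z : Vt r := (Sym2.Mem.other' he0B.2) with hzdef
    have hzspec : s(u, z) = e0 := Sym2.other_spec' he0B.2
    have huzB : s(u, z) ∈ B := by rw [hzspec]; exact he0B.1
    have huz : u.1 ≠ z.1 := ecross huzB
    have hzuniq : ∀ {x : Vt r}, s(u, x) ∈ B → x = z := by
      intro x hx
      have hxe := hue _ hx (by simp)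
      rw [← hzspec] at hxe
      rcases Sym2.eq_iff.mp hxe with ⟨_, h⟩ | ⟨h1, _⟩
      · exact h
      · exact absurd (congrArg Sigma.fst h1) huz
    set p : Vt r := ⟨u.1, u.2 + 1⟩ with hp
    set q : Vt r := ⟨u.1, u.2 + 2⟩ with hq
    set z1 : Vt r := ⟨z.1, z.2 + 1⟩ with hz1def
    have hz1z : z1.1 = z.1 := by rw [hz1def]
    have hp1 : p.1 = u.1 := by rw [hp]
    have hq1 : q.1 = u.1 := by rw [hq]
    have hz1nz : z1 ≠ z := by rw [hz1def]; exact pm1_ne z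
    have hcov : ∀ w : Vt r, w.1 ≠ u.1 → w.1 ≠ z.1 →
        s(w, p) ∈ B ∨ s(w, q) ∈ B ∨ s(w, z) ∈ B := by
      intro w hwu hwz
      obtain ⟨v, hvu, hvw, h1, h2⟩ := hA u w (fun e => hwu e.symm)
      rcases h1 with h1 | h1
      · have h2' : s(v, w) ∈ B := by
          rcases h2 with h2 | h2
          · exact absurd (h2.symm.trans h1) hwu
          · exact h2
        rcases same_part_cases h1 with he | he | he
        · exact absurd he hvu
        · left; rw [Sym2.eq_swap]; rw [he] at h2'; exact h2'
        · right; left; rw [Sym2.eq_swap]; rw [he] at h2'; exact h2'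
      · have hveq : v = z := hzuniq (by rw [Sym2.eq_swap]; exact h1)
        rcases h2 with h2 | h2
        · rw [hveq] at h2; exact absurd h2.symm hwz
        · right; right; rw [hveq] at h2; rw [Sym2.eq_swap]; exact h2
    have hhub : s(z, p) ∈ B ∨ s(z, q) ∈ B := by
      obtain ⟨v, hvu, hvz, h1, h2⟩ := hA u z huz
      rcases h1 with h1 | h1
      · have h2' : s(v, z) ∈ B := by
          rcases h2 with h2 | h2
          · exact absurd (h1.symm.trans h2) huz
          · exact h2
        rcases same_part_cases h1 with he | he | he
        · exact absurd he hvu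
        · left; rw [he] at h2'; rw [Sym2.eq_swap] at h2'; exact h2'
        · right; rw [he] at h2'; rw [Sym2.eq_swap] at h2'; exact h2'
      · exact absurd (hzuniq (by rw [Sym2.eq_swap]; exact h1)) hvz
    -- hub degree sum dominates the two filters
    set F1 : Finset (Sym2 (Vt r)) := B.filter (fun e => p ∈ e ∨ q ∈ e ∨ z ∈ e) with hF1def
    set F2 : Finset (Sym2 (Vt r)) := B.filter (fun e => z ∈ e ∧ (p ∈ e ∨ q ∈ e)) with hF2def
    have hD : F1.card + F2.card ≤ d p + d q + d z := by
      have e1 : d p + d q + d z = ∑ e ∈ B, ((if p ∈ e then 1 else 0) +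
          (if q ∈ e then 1 else 0) + (if z ∈ e then 1 else 0)) := by
        rw [hd]
        simp only []
        rw [Finset.card_filter, Finset.card_filter, Finset.card_filter,
          ← Finset.sum_add_distrib, ← Finset.sum_add_distrib]
      have e2 : F1.card + F2.card = ∑ e ∈ B, ((if p ∈ e ∨ q ∈ e ∨ z ∈ e then 1 else 0) +
          (if z ∈ e ∧ (p ∈ e ∨ q ∈ e) then 1 else 0)) := by
        rw [hF1def, hF2def, Finset.card_filter, Finset.card_filter, ← Finset.sum_add_distrib]
      rw [e1, e2]
      apply Finset.sum_le_sum
      intro e he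
      by_cases h1 : p ∈ e <;> by_cases h2 : q ∈ e <;> by_cases h3 : z ∈ e <;>
        simp [h1, h2, h3]
    -- the coverage injection
    set W : Finset (Vt r) := Finset.univ.filter (fun w : Vt r => w.1 ≠ u.1 ∧ w.1 ≠ z.1)
      with hWdef
    have hWc : 3 * r - 6 ≤ W.card := by
      have hsub2 : Finset.univ \ ((Finset.univ.filter (fun v : Vt r => v.1 = u.1)) ∪
          (Finset.univ.filter (fun v : Vt r => v.1 = z.1))) ⊆ W := by
        intro v hv
        simp only [Finset.mem_sdiff, Finset.mem_univ, true_and, Finset.mem_union,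
          Finset.mem_filter] at hv
        push_neg at hv
        simp only [hWdef, Finset.mem_filter, Finset.mem_univ, true_and]
        exact ⟨hv.1, hv.2⟩
      have hc1 := Finset.card_le_card hsub2
      rw [Finset.card_sdiff_of_subset (Finset.subset_univ _), univ_card] at hc1
      have hc2 := Finset.card_union_le
        (Finset.univ.filter (fun v : Vt r => v.1 = u.1))
        (Finset.univ.filter (fun v : Vt r => v.1 = z.1))
      rw [part_card u.1, part_card z.1] at hc2
      omega
    set T : Finset (Vt r) := insert u W with hTdef
    have huW : u ∉ W := by simp [hWdef]
    have hTc : 3 * r - 5 ≤ T.card := by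
      rw [hTdef, Finset.card_insert_of_notMem huW]
      omega
    have hTnot : ∀ w ∈ T, w ≠ p ∧ w ≠ q ∧ w ≠ z := by
      intro w hw
      rcases Finset.mem_insert.mp hw with he | he
      · subst he
        exact ⟨Ne.symm (pm1_ne w), Ne.symm (pm2_ne w), ne_of_fst huz⟩
      · simp only [hWdef, Finset.mem_filter, Finset.mem_univ, true_and] at he
        exact ⟨ne_of_fst he.1, ne_of_fst he.1, ne_of_fst he.2⟩
    set g : Vt r → Sym2 (Vt r) := fun w =>
      if s(w, p) ∈ B then s(w, p) else if s(w, q) ∈ B then s(w, q) else s(w, z) with hgdef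
    have hgmem : ∀ w ∈ T, g w ∈ B ∧ ∃ h', (h' = p ∨ h' = q ∨ h' = z) ∧ g w = s(w, h') := by
      intro w hw
      have hcover : s(w, p) ∈ B ∨ s(w, q) ∈ B ∨ s(w, z) ∈ B := by
        rcases Finset.mem_insert.mp hw with he | he
        · subst he
          exact Or.inr (Or.inr huzB)
        · simp only [hWdef, Finset.mem_filter, Finset.mem_univ, true_and] at he
          exact hcov w he.1 he.2
      rw [hgdef]
      simp only []
      by_cases c1 : s(w, p) ∈ B
      · rw [if_pos c1]
        exact ⟨c1, p, Or.inl rfl, rfl⟩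
      by_cases c2 : s(w, q) ∈ B
      · rw [if_neg c1, if_pos c2]
        exact ⟨c2, q, Or.inr (Or.inl rfl), rfl⟩
      · rw [if_neg c1, if_neg c2]
        have : s(w, z) ∈ B := by tauto
        exact ⟨this, z, Or.inr (Or.inr rfl), rfl⟩
    have hginj : Set.InjOn g ↑T := by
      intro w1 h1 w2 h2 he
      obtain ⟨_, a1, ha1, he1⟩ := hgmem w1 (by simpa using h1)
      obtain ⟨_, a2, ha2, he2⟩ := hgmem w2 (by simpa using h2)
      rw [he1, he2] at he
      rcases Sym2.eq_iff.mp he with ⟨h, _⟩ | ⟨h, _⟩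
      · exact h
      · exfalso
        have := hTnot w1 (by simpa using h1)
        rcases ha2 with e | e | e <;> rw [e] at h <;> tauto
    set ζ : Sym2 (Vt r) := if s(z, p) ∈ B then s(z, p) else s(z, q) with hζdef
    have hζB : ζ ∈ B ∧ (p ∈ ζ ∨ q ∈ ζ) ∧ z ∈ ζ := by
      rw [hζdef]
      by_cases c1 : s(z, p) ∈ B
      · rw [if_pos c1]
        exact ⟨c1, Or.inl (by simp), by simp⟩
      · rw [if_neg c1]
        have : s(z, q) ∈ B := by tauto
        exact ⟨this, Or.inr (by simp), by simp⟩
    have hζ_notin : ζ ∉ T.image g := by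
      intro hmem
      obtain ⟨w, hwT, hwe⟩ := Finset.mem_image.mp hmem
      obtain ⟨_, a, ha, hea⟩ := hgmem w hwT
      rw [hea] at hwe
      have hzζ : z ∈ ζ := hζB.2.2
      have hpq : p ∈ ζ ∨ q ∈ ζ := hζB.2.1
      rw [← hwe] at hzζ hpq
      have hT := hTnot w hwT
      -- z ∈ s(w, a) : z = w ∨ z = a ; w ≠ z so z = a... then p or q ∈ s(w,a=z): = w or = z
      rcases Sym2.mem_iff.mp hzζ with hc | hc
      · exact hT.2.2 hc.symm
      · rcases hpq with hp' | hp'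
        · rcases Sym2.mem_iff.mp hp' with e | e
          · exact hT.1 e.symm
          · refine huz ?_
            rw [← hp1]
            exact congrArg Sigma.fst (e.trans hc.symm)
        · rcases Sym2.mem_iff.mp hp' with e | e
          · exact hT.2.1 e.symm
          · refine huz ?_
            rw [← hq1]
            exact congrArg Sigma.fst (e.trans hc.symm)
    have hF1a : T.card + 1 ≤ F1.card := by
      have hsubF : T.image g ∪ {ζ} ⊆ F1 := by
        intro e he
        rcases Finset.mem_union.mp he with he | he
        · obtain ⟨w, hwT, hwe⟩ := Finset.mem_image.mp he
          obtain ⟨hgB, a, ha, hea⟩ := hgmem w hwT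
          rw [← hwe]
          refine Finset.mem_filter.mpr ⟨hgB, ?_⟩
          rcases ha with e' | e' | e'
          · left; rw [hea, e']; simp
          · right; left; rw [hea, e']; simp
          · right; right; rw [hea, e']; simp
        · rw [Finset.mem_singleton.mp he]
          refine Finset.mem_filter.mpr ⟨hζB.1, ?_⟩
          rcases hζB.2.1 with h | h
          · exact Or.inl h
          · exact Or.inr (Or.inl h)
      have hcu : (T.image g ∪ {ζ}).card = T.card + 1 := by
        rw [Finset.card_union_of_disjoint (by simp [hζ_notin]),
          Finset.card_image_of_injOn hginj, Finset.card_singleton]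
      calc T.card + 1 = (T.image g ∪ {ζ}).card := hcu.symm
        _ ≤ F1.card := Finset.card_le_card hsubF
    have hF2a : 1 ≤ F2.card :=
      Finset.card_pos.mpr ⟨ζ, Finset.mem_filter.mpr ⟨hζB.1, hζB.2.2, hζB.2.1⟩⟩
    -- the edge at z1
    have hz1u : z1 ≠ u := ne_of_fst (fun e => huz ((hz1z.symm.trans e).symm))
    obtain ⟨e1, he1⟩ := Finset.card_pos.mp
      (lt_of_lt_of_le Nat.zero_lt_one (hdpos z1))
    have he1B : e1 ∈ B := (Finset.mem_filter.mp he1).1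
    have hz1e1 : z1 ∈ e1 := (Finset.mem_filter.mp he1).2
    set t : Vt r := Sym2.Mem.other' hz1e1 with htdef
    have hts : s(z1, t) = e1 := Sym2.other_spec' hz1e1
    have hz1t : z1.1 ≠ t.1 := ecross (by rw [hts]; exact he1B)
    have htz1 : t ≠ z1 := fun e => hz1t (by rw [e])
    have htz : t ≠ z := fun e => hz1t (by rw [e])
    have htu : t ≠ u := by
      intro e
      have hu_e1 : u ∈ e1 := by rw [← hts, ← e]; simp
      have he1e0 : e1 = e0 := hue e1 he1B hu_e1
      have : z1 ∈ s(u, z) := by rw [hzspec, ← he1e0]; exact hz1e1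
      rcases Sym2.mem_iff.mp this with hc | hc
      · exact hz1u hc
      · exact pm1_ne z hc
    have hte1 : t ∈ e1 := by rw [← hts]; simp
    -- triple sum decomposition (hubs p, q, z)
    have hpz : p ≠ z := ne_of_fst huz
    have hqz : q ≠ z := ne_of_fst huz
    have htriple : ∑ v ∈ ({p, q, z} : Finset (Vt r)), d v = d p + (d q + d z) := by
      rw [Finset.sum_insert (by simp only [Finset.mem_insert, Finset.mem_singleton, not_or]; exact ⟨pm1_ne_pm2 u, hpz⟩),
        Finset.sum_insert (by simp [hqz]), Finset.sum_singleton]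
    have hsdiff : ∑ v ∈ (Finset.univ \ ({p, q, z} : Finset (Vt r))), d v +
        ∑ v ∈ ({p, q, z} : Finset (Vt r)), d v = ∑ v, d v :=
      Finset.sum_sdiff (Finset.subset_univ _)
    have hcard3 : ({p, q, z} : Finset (Vt r)).card = 3 := by
      rw [Finset.card_insert_of_notMem (by simp only [Finset.mem_insert, Finset.mem_singleton, not_or]; exact ⟨pm1_ne_pm2 u, hpz⟩),
        Finset.card_insert_of_notMem (by simp [hqz]), Finset.card_singleton]
    have hcards : (Finset.univ \ ({p, q, z} : Finset (Vt r))).card = 3 * r - 3 := by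
      rw [Finset.card_sdiff_of_subset (Finset.subset_univ _), univ_card, hcard3]
    by_cases hthub : t = p ∨ t = q
    · -- t is a hub: e1 is one more edge counted by F1
      have he1F1 : e1 ∈ F1 := by
        refine Finset.mem_filter.mpr ⟨he1B, ?_⟩
        rcases hthub with e | e
        · left; rw [← hts, e]; simp
        · right; left; rw [← hts, e]; simp
      have he1new : e1 ∉ T.image g ∪ {ζ} := by
        intro hmem
        have hz1mem : ∀ x ∈ T.image g ∪ {ζ}, z1 ∉ x := by
          intro x hx
          rcases Finset.mem_union.mp hx with hx | hx
          · obtain ⟨w, hwT, hwe⟩ := Finset.mem_image.mp hx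
            obtain ⟨_, a, ha, hea⟩ := hgmem w hwT
            rw [← hwe, hea]
            intro hmm
            rcases Sym2.mem_iff.mp hmm with hc | hc
            · -- z1 = w ∈ T: but z1.1 = z.1 contradicts T-membership
              rcases Finset.mem_insert.mp hwT with hw' | hw'
              · exact hz1u (hc.trans hw')
              · simp only [hWdef, Finset.mem_filter, Finset.mem_univ, true_and] at hw'
                exact hw'.2 (by rw [← hc])
            · rcases ha with e | e | e
              · rw [e] at hc
                refine huz ?_
                rw [← hp1, ← congrArg Sigma.fst hc]
                all_goals exact hz1z
              · rw [e] at hc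
                refine huz ?_
                rw [← hq1, ← congrArg Sigma.fst hc]
                all_goals exact hz1z
              · rw [e] at hc; exact hz1nz hc
          · rw [Finset.mem_singleton.mp hx]
            rw [hζdef]
            intro hmm
            have : z1 = z ∨ z1 = p ∨ z1 = q := by
              by_cases c1 : s(z, p) ∈ B
              · rw [if_pos c1] at hmm
                rcases Sym2.mem_iff.mp hmm with hc | hc
                · exact Or.inl hc
                · exact Or.inr (Or.inl hc)
              · rw [if_neg c1] at hmm
                rcases Sym2.mem_iff.mp hmm with hc | hc
                · exact Or.inl hc
                · exact Or.inr (Or.inr hc)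
            rcases this with e | e | e
            · exact hz1nz e
            · refine huz ?_
              rw [← hp1, ← congrArg Sigma.fst e]
              all_goals exact hz1z
            · refine huz ?_
              rw [← hq1, ← congrArg Sigma.fst e]
              all_goals exact hz1z
        exact hz1mem e1 hmem hz1e1
      have hF1b : T.card + 2 ≤ F1.card := by
        have hsubF : insert e1 (T.image g ∪ {ζ}) ⊆ F1 := by
          intro e he
          rcases Finset.mem_insert.mp he with he | he
          · rw [he]; exact he1F1
          · -- reuse the previous subset proof
            rcases Finset.mem_union.mp he with he | he
            · obtain ⟨w, hwT, hwe⟩ := Finset.mem_image.mp he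
              obtain ⟨hgB, a, ha, hea⟩ := hgmem w hwT
              rw [← hwe]
              refine Finset.mem_filter.mpr ⟨hgB, ?_⟩
              rcases ha with e' | e' | e'
              · left; rw [hea, e']; simp
              · right; left; rw [hea, e']; simp
              · right; right; rw [hea, e']; simp
            · rw [Finset.mem_singleton.mp he]
              refine Finset.mem_filter.mpr ⟨hζB.1, ?_⟩
              rcases hζB.2.1 with h | h
              · exact Or.inl h
              · exact Or.inr (Or.inl h)
        have hcu : (insert e1 (T.image g ∪ {ζ})).card = T.card + 2 := by
          rw [Finset.card_insert_of_notMem he1new,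
            Finset.card_union_of_disjoint (by simp [hζ_notin]),
            Finset.card_image_of_injOn hginj, Finset.card_singleton]
        calc T.card + 2 = (insert e1 (T.image g ∪ {ζ})).card := hcu.symm
          _ ≤ F1.card := Finset.card_le_card hsubF
      have hrest : 3 * r - 3 ≤ ∑ v ∈ (Finset.univ \ ({p, q, z} : Finset (Vt r))), d v := by
        have hge : ∀ v ∈ Finset.univ \ ({p, q, z} : Finset (Vt r)), 1 ≤ d v :=
          fun v _ => hdpos v
        have hns := Finset.card_nsmul_le_sum _ (fun v => d v) 1 hge
        rw [hcards] at hns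
        simpa using hns
      omega
    · -- t is not a hub: t gets an extra edge
      push_neg at hthub
      have htp : t ≠ p := hthub.1
      have htq : t ≠ q := hthub.2
      have htu1 : t.1 ≠ u.1 := by
        intro e
        rcases same_part_cases e with h | h | h
        · exact htu h
        · exact htp h
        · exact htq h
      have htz' : t.1 ≠ z.1 := fun e => hz1t (hz1z.trans e.symm)
      have htT : t ∈ T := Finset.mem_insert_of_mem
        (Finset.mem_filter.mpr ⟨Finset.mem_univ _, htu1, htz'⟩)
      obtain ⟨hgtB, a, ha, hgte⟩ := hgmem t htT
      have hne_e : e1 ≠ g t := by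
        intro e
        rw [← hts, hgte] at e
        rcases Sym2.eq_iff.mp e with ⟨h, _⟩ | ⟨h, h'⟩
        · exact htz1 h.symm
        · -- z1 = a hub
          rcases ha with e' | e' | e'
          · rw [e'] at h
            refine huz ?_
            rw [← hp1, ← congrArg Sigma.fst h]
            all_goals exact hz1z
          · rw [e'] at h
            refine huz ?_
            rw [← hq1, ← congrArg Sigma.fst h]
            all_goals exact hz1z
          · rw [e'] at h; exact hz1nz h
      have hdt2 : 2 ≤ d t := two_le_d he1B hgtB hne_e hte1 (by rw [hgte]; simp)
      have htmem : t ∈ Finset.univ \ ({p, q, z} : Finset (Vt r)) := by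
        simp only [Finset.mem_sdiff, Finset.mem_univ, true_and, Finset.mem_insert,
          Finset.mem_singleton]
        push_neg
        exact ⟨htp, htq, htz⟩
      have hrest : 3 * r - 4 + 2 ≤
          ∑ v ∈ (Finset.univ \ ({p, q, z} : Finset (Vt r))), d v := by
        rw [← Finset.add_sum_erase _ (fun v => d v) htmem]
        have hcard' : ((Finset.univ \ ({p, q, z} : Finset (Vt r))).erase t).card
            = 3 * r - 4 := by
          rw [Finset.card_erase_of_mem htmem, hcards]
          omega
        have hge : ∀ v ∈ (Finset.univ \ ({p, q, z} : Finset (Vt r))).erase t, 1 ≤ d v :=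
          fun v _ => hdpos v
        have hns := Finset.card_nsmul_le_sum _ (fun v => d v) 1 hge
        rw [hcard'] at hns
        simp only [smul_eq_mul, mul_one] at hns
        omega
      omega

section Six
variable {r : ℕ}
/-- If some vertex has value 3, the weight is at least 6. -/
lemma six_le_of_three (f : Vt r → ℕ) (hf : IsDRDF (KG r) f) (w : Vt r) (hw3 : f w = 3) :
    6 ≤ ∑ v, f v := by
  obtain ⟨hub, h0, h1⟩ := hf

  -- helper dealing with a partmate of value 0 or 1
  have key : ∀ t : Vt r, t.1 = w.1 → t ≠ w → f t ≤ 1 → 6 ≤ ∑ v, f v := by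
    intro t ht1 htw hft
    by_cases h : f t = 0
    · rcases h0 t h with ⟨x, hadj, hx3⟩ | ⟨x, y, hax, hay, hxy, hx2, hy2⟩
      · have hxw : w ≠ x := fun e => (adj_iff.mp hadj) (by rw [← e, ht1])
        have := le_sum2 f hxw
        omega
      · have hxw : w ≠ x := fun e => by rw [← e, hw3] at hx2; omega
        have hyw : w ≠ y := fun e => by rw [← e, hw3] at hy2; omega
        have := le_sum3 f hxw hyw hxy
        omega
    · have h1t : f t = 1 := by omega
      obtain ⟨x, hadj, hx2⟩ := h1 t h1t
      have htx : t ≠ x := fun e => (adj_iff.mp hadj) (congrArg Sigma.fst e)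
      have hwx : w ≠ x := fun e => (adj_iff.mp hadj) (by rw [← e, ht1])
      have hwt : w ≠ t := htw.symm
      have := le_sum3 f hwt hwx (fun e => (adj_iff.mp hadj) (by rw [e]))
      omega
  by_cases hfb : f (⟨w.1, w.2 + 1⟩ : Vt r) ≤ 1
  · exact key ⟨w.1, w.2 + 1⟩ rfl (pm1_ne w) hfb
  by_cases hfc : f (⟨w.1, w.2 + 2⟩ : Vt r) ≤ 1
  · exact key ⟨w.1, w.2 + 2⟩ rfl (pm2_ne w) hfc
  · have := le_sum3 f (Ne.symm (pm1_ne w)) (Ne.symm (pm2_ne w)) (pm1_ne_pm2 w)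
    omega

lemma six_le_weight (hr : 2 ≤ r) (f : Vt r → ℕ) (hf : IsDRDF (KG r) f) :
    6 ≤ ∑ v, f v := by
  obtain ⟨hub, h0, h1⟩ := hf
  by_cases h3 : ∃ w, f w = 3
  · obtain ⟨w, hw⟩ := h3
    exact six_le_of_three f ⟨hub, h0, h1⟩ w hw
  push_neg at h3
  by_cases h0e : ∃ v, f v = 0
  · obtain ⟨v, hv⟩ := h0e
    rcases h0 v hv with ⟨x, hadj, hx3⟩ | ⟨x, y, hax, hay, hxy, hx2, hy2⟩
    · exact absurd hx3 (h3 x)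
    by_cases hxy1 : x.1 = y.1
    · -- x, y in same part; consider third vertex t of that part
      set t : Vt r := ⟨x.1, -x.2 - y.2⟩ with htdef
      have hx2y2 : x.2 ≠ y.2 := by
        intro e
        exact hxy (Sigma.ext hxy1 (heq_of_eq e))
      have htx : t ≠ x := by
        have := (fin3_third x.2 y.2 hx2y2).1
        conv_rhs => rw [show x = (⟨x.1, x.2⟩ : Vt r) from rfl]
        exact mk_ne_of_snd this
      have hty : t ≠ y := by
        have := (fin3_third x.2 y.2 hx2y2).2
        intro e
        rw [e] at htdef
        have : y = ⟨x.1, y.2⟩ := Sigma.ext hxy1.symm (by simp)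
        rw [this] at htdef
        exact (fin3_third x.2 y.2 hx2y2).2 (by simpa [Sigma.ext_iff] using htdef.symm)
      have ht1 : t.1 = x.1 := rfl
      by_cases hft : f t = 0
      · rcases h0 t hft with ⟨u, hadj', hu3⟩ | ⟨u1, u2, hau1, hau2, hu12, hu1c, hu2c⟩
        · exact absurd hu3 (h3 u)
        · have hu1x : x ≠ u1 := fun e => (adj_iff.mp hau1) (by rw [← e, ht1])
          have hu1y : y ≠ u1 := fun e => (adj_iff.mp hau1) (by rw [← e, ht1, hxy1])
          have := le_sum4 f hxy hu1x (fun e => (adj_iff.mp hau2) (by rw [← e, ht1]))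
            hu1y (fun e => (adj_iff.mp hau2) (by rw [← e, ht1, hxy1])) hu12
          omega
      by_cases hft1 : f t = 1
      · obtain ⟨s, hadj', hs2⟩ := h1 t hft1
        have hsx : x ≠ s := fun e => (adj_iff.mp hadj') (by rw [← e, ht1])
        have hsy : y ≠ s := fun e => (adj_iff.mp hadj') (by rw [← e, ht1, hxy1])
        have hts : t ≠ s := fun e => (adj_iff.mp hadj') (congrArg Sigma.fst e ▸ rfl)
        have := le_sum4 f hxy htx.symm hsx hty.symm hsy hts
        omega
      · have := le_sum3 f hxy htx.symm hty.symm
        omega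
    · -- x, y in different parts: use partmates of x
      have key2 : ∀ t : Vt r, t.1 = x.1 → f t = 0 → 6 ≤ ∑ v, f v := by
        intro t ht1 hft
        rcases h0 t hft with ⟨u, hadj', hu3⟩ | ⟨u1, u2, hau1, hau2, hu12, hu1c, hu2c⟩
        · exact absurd hu3 (h3 u)
        · have h1x : x ≠ u1 := fun e => (adj_iff.mp hau1) (by rw [← e, ht1])
          have h2x : x ≠ u2 := fun e => (adj_iff.mp hau2) (by rw [← e, ht1])
          have := le_sum3 f h1x h2x hu12
          omega
      by_cases hfx1 : f (⟨x.1, x.2 + 1⟩ : Vt r) = 0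
      · exact key2 ⟨x.1, x.2 + 1⟩ rfl hfx1
      by_cases hfx2 : f (⟨x.1, x.2 + 2⟩ : Vt r) = 0
      · exact key2 ⟨x.1, x.2 + 2⟩ rfl hfx2
      · have hyx1 : y ≠ (⟨x.1, x.2 + 1⟩ : Vt r) := fun e => hxy1 (by rw [e])
        have hyx2 : y ≠ (⟨x.1, x.2 + 2⟩ : Vt r) := fun e => hxy1 (by rw [e])
        have := le_sum4 f hxy (Ne.symm (pm1_ne x)) (Ne.symm (pm2_ne x))
          hyx1 hyx2 (pm1_ne_pm2 x)
        omega
  · push_neg at h0e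
    have : ∀ v : Vt r, v ∈ Finset.univ → 1 ≤ f v := fun v _ => by
      have := h0e v; omega
    have hcard : (Finset.univ : Finset (Vt r)).card = 3 * r := by
      simp [Finset.card_univ, mul_comm]
    calc (6 : ℕ) = 6 := rfl
      _ ≤ 3 * r := by omega
      _ = (Finset.univ : Finset (Vt r)).card • 1 := by rw [hcard]; simp
      _ ≤ ∑ v, f v := Finset.card_nsmul_le_sum _ _ _ this

end Six

section Upper
variable {r : ℕ}

lemma fin3_enum : ∀ j : Fin 3, j = 0 ∨ j = 1 ∨ j = 2 := by decide

lemma upper (hr : 2 ≤ r) : ∃ Bs : Finset (Sym2 (Vt r)), ↑Bs ⊆ (KG r).edgeSet ∧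
    Bs.card = 3 * (r - 1) + 1 ∧
    ∀ f, IsDRDF ((KG r).deleteEdges ↑Bs) f → 7 ≤ ∑ v, f v := by
  have h0r : 0 < r := by omega
  have h1r : 1 < r := by omega
  set i0 : Fin r := ⟨0, h0r⟩ with hi0
  set i1 : Fin r := ⟨1, h1r⟩ with hi1
  have hi01 : i0 ≠ i1 := by
    intro h
    rw [hi0, hi1] at h
    simpa using congrArg Fin.val h
  set v0 : Vt r := ⟨i0, 0⟩ with hv0
  set v1 : Vt r := ⟨i0, 1⟩ with hv1
  set v2 : Vt r := ⟨i0, 2⟩ with hv2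
  set w0 : Vt r := ⟨i1, 0⟩ with hw0
  have hv0i : v0.1 = i0 := by rw [hv0]
  have hv1i : v1.1 = i0 := by rw [hv1]
  have hv2i : v2.1 = i0 := by rw [hv2]
  have hw0i : w0.1 = i1 := by rw [hw0]
  have hv0v1 : v0 ≠ v1 := by rw [hv0, hv1]; exact mk_ne_of_snd (by decide)
  have hv0v2 : v0 ≠ v2 := by rw [hv0, hv2]; exact mk_ne_of_snd (by decide)
  have hv1v2 : v1 ≠ v2 := by rw [hv1, hv2]; exact mk_ne_of_snd (by decide)
  have hw0v0 : w0 ≠ v0 := ne_of_fst (by rw [hw0i, hv0i]; exact fun e => hi01 e.symm)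
  have hw0v1 : w0 ≠ v1 := ne_of_fst (by rw [hw0i, hv1i]; exact fun e => hi01 e.symm)
  have hw0v2 : w0 ≠ v2 := ne_of_fst (by rw [hw0i, hv2i]; exact fun e => hi01 e.symm)
  set Bs : Finset (Sym2 (Vt r)) :=
    (Finset.univ.filter (fun w : Vt r => ¬ w.1 = i0)).image (fun w => s(v0, w)) ∪ {s(v1, w0)}
    with hBs
  have memBs : ∀ e : Sym2 (Vt r), e ∈ Bs ↔
      (∃ w : Vt r, ¬ w.1 = i0 ∧ e = s(v0, w)) ∨ e = s(v1, w0) := by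
    intro e
    rw [hBs]
    simp only [Finset.mem_union, Finset.mem_image, Finset.mem_filter, Finset.mem_univ,
      true_and, Finset.mem_singleton]
    constructor
    · rintro (⟨w, hw, he⟩ | he)
      · exact Or.inl ⟨w, hw, he.symm⟩
      · exact Or.inr he
    · rintro (⟨w, hw, he⟩ | he)
      · exact Or.inl ⟨w, hw, he.symm⟩
      · exact Or.inr he
  have hsubE : ↑Bs ⊆ (KG r).edgeSet := by
    intro e he
    rcases (memBs e).mp he with ⟨w, hw, he'⟩ | he'
    · rw [he']
      exact (KG r).mem_edgeSet.mpr (adj_iff.mpr (by rw [hv0i]; exact fun c => hw c.symm))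
    · rw [he']
      exact (KG r).mem_edgeSet.mpr (adj_iff.mpr (by rw [hv1i, hw0i]; exact hi01))
  have hcardBs : Bs.card = 3 * (r - 1) + 1 := by
    rw [hBs]
    have hnotin : s(v1, w0) ∉
        (Finset.univ.filter (fun w : Vt r => ¬ w.1 = i0)).image (fun w => s(v0, w)) := by
      intro hmem
      obtain ⟨w, hw, he⟩ := Finset.mem_image.mp hmem
      rcases Sym2.eq_iff.mp he with ⟨h1, _⟩ | ⟨h1, h2⟩
      · exact hv0v1 h1
      · exact hw0v0 h1.symm
    rw [Finset.card_union_of_disjoint (by simp [hnotin]), Finset.card_singleton]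
    have himg : ((Finset.univ.filter (fun w : Vt r => ¬ w.1 = i0)).image
        (fun w => s(v0, w))).card = (Finset.univ.filter (fun w : Vt r => ¬ w.1 = i0)).card := by
      apply Finset.card_image_of_injOn
      intro a ha b hb he
      simp only [Finset.mem_coe, Finset.mem_filter, Finset.mem_univ, true_and] at ha hb
      rcases Sym2.eq_iff.mp he with ⟨_, h⟩ | ⟨h1, h2⟩
      · exact h
      · exact absurd (by rw [← h1]; all_goals exact hv0i) hb
    rw [himg]
    have hfc := Finset.card_filter_add_card_filter_not
      (s := (Finset.univ : Finset (Vt r))) (p := fun w : Vt r => w.1 = i0)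
    rw [part_card i0, univ_card] at hfc
    omega
  refine ⟨Bs, hsubE, hcardBs, ?_⟩
  intro f hf
  obtain ⟨hub, h0, h1⟩ := hf
  set G' := (KG r).deleteEdges ↑Bs with hG'
  have hA1 : ∀ x : Vt r, ¬ G'.Adj v0 x := by
    intro x hadj
    rw [hG', SimpleGraph.deleteEdges_adj] at hadj
    obtain ⟨hKG, hnm⟩ := hadj
    exact hnm (by
      apply Finset.mem_coe.mpr
      exact (memBs _).mpr (Or.inl ⟨x, fun c => (adj_iff.mp hKG) (by rw [hv0i, c]), rfl⟩))
  have hnbr : ∀ {a b : Vt r}, G'.Adj a b → b ≠ v0 := by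
    intro a b hadj e
    rw [e] at hadj
    exact hA1 a hadj.symm
  have hA2 : ¬ G'.Adj w0 v1 := by
    intro hadj
    rw [hG', SimpleGraph.deleteEdges_adj] at hadj
    exact hadj.2 (by
      apply Finset.mem_coe.mpr
      exact (memBs _).mpr (Or.inr (Sym2.eq_swap)))
  have hadj1 : ∀ {a b : Vt r}, G'.Adj a b → a.1 ≠ b.1 := by
    intro a b hadj
    rw [hG', SimpleGraph.deleteEdges_adj] at hadj
    exact adj_iff.mp hadj.1
  -- f v0 ≥ 2
  have hfv0 : 2 ≤ f v0 := by
    by_cases hz : f v0 = 0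
    · rcases h0 v0 hz with ⟨x, hadj, _⟩ | ⟨x, y, hadj, _, _, _, _⟩
      · exact absurd hadj (hA1 x)
      · exact absurd hadj (hA1 x)
    by_cases ho : f v0 = 1
    · obtain ⟨x, hadj, _⟩ := h1 v0 ho
      exact absurd hadj (hA1 x)
    omega
  have hpart0 : ∀ x : Vt r, x.1 = i0 → x ≠ v0 → x = v1 ∨ x = v2 := by
    intro x hx hxv
    have hxe : x = ⟨i0, x.2⟩ := eq_mk_of_fst hx
    rcases fin3_enum x.2 with h | h | h
    · exact absurd (by rw [hxe, h, ← hv0]) hxv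
    · exact Or.inl (by rw [hxe, h, ← hv1])
    · exact Or.inr (by rw [hxe, h, ← hv2])
  by_cases h3 : ∃ w : Vt r, w ≠ v0 ∧ f w = 3
  · obtain ⟨w, hwv0, hw3⟩ := h3
    by_cases hwi : w.1 = i0
    · -- w lies in part 0
      have keyA1 : ∀ b : Vt r, b.1 = i0 → b ≠ w → b ≠ v0 → 7 ≤ ∑ v, f v := by
        intro b hbi hbw hbv0
        by_cases hfb : f b = 0
        · rcases h0 b hfb with ⟨x, hadj, hx3⟩ | ⟨x, y, hax, hay, hxy, hx2, hy2⟩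
          · have hx1 : x.1 ≠ i0 := fun c => (hadj1 hadj) (hbi.trans c.symm)
            have hxw : x ≠ w := ne_of_fst (by rw [hwi]; exact hx1)
            have hxv0 : x ≠ v0 := ne_of_fst (by rw [hv0i]; exact hx1)
            have := le_sum3 f hwv0.symm hxv0.symm hxw.symm
            omega
          · have hx1 : x.1 ≠ i0 := fun c => (hadj1 hax) (hbi.trans c.symm)
            have hy1 : y.1 ≠ i0 := fun c => (hadj1 hay) (hbi.trans c.symm)
            have hxw : x ≠ w := ne_of_fst (by rw [hwi]; exact hx1)
            have hyw : y ≠ w := ne_of_fst (by rw [hwi]; exact hy1)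
            have hxv0 : x ≠ v0 := ne_of_fst (by rw [hv0i]; exact hx1)
            have hyv0 : y ≠ v0 := ne_of_fst (by rw [hv0i]; exact hy1)
            have := le_sum4 f hwv0.symm hxv0.symm hyv0.symm hxw.symm hyw.symm hxy
            omega
        by_cases hfb1 : f b = 1
        · obtain ⟨x, hadj, hx2⟩ := h1 b hfb1
          have hx1 : x.1 ≠ i0 := fun c => (hadj1 hadj) (hbi.trans c.symm)
          have hxw : x ≠ w := ne_of_fst (by rw [hwi]; exact hx1)
          have hxv0 : x ≠ v0 := ne_of_fst (by rw [hv0i]; exact hx1)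
          have hxb : x ≠ b := ne_of_fst (by rw [hbi]; exact hx1)
          have hbval := hub x
          have := le_sum4 f hwv0.symm hbv0.symm hxv0.symm hbw.symm hxw.symm hxb.symm
          omega
        · have h2b : 2 ≤ f b := by omega
          have := le_sum3 f hwv0.symm hbv0.symm hbw.symm
          omega
      rcases hpart0 w hwi hwv0 with hw | hw
      · exact keyA1 v2 hv2i (by rw [hw]; exact hv1v2.symm) hv0v2.symm
      · exact keyA1 v1 hv1i (by rw [hw]; exact hv1v2) hv0v1.symm
    · -- w outside part 0
      have keyA2 : ∀ t : Vt r, t.1 = w.1 → f t = 0 → 7 ≤ ∑ v, f v := by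
        intro t ht hft
        rcases h0 t hft with ⟨x, hadj, hx3⟩ | ⟨x, y, hax, hay, hxy, hx2, hy2⟩
        · have hxw : x ≠ w := ne_of_fst (fun c => (hadj1 hadj) (ht.trans c.symm))
          have hxv0 : x ≠ v0 := hnbr hadj
          have := le_sum3 f hwv0.symm hxv0.symm hxw.symm
          omega
        · have hxw : x ≠ w := ne_of_fst (fun c => (hadj1 hax) (ht.trans c.symm))
          have hyw : y ≠ w := ne_of_fst (fun c => (hadj1 hay) (ht.trans c.symm))
          have hxv0 : x ≠ v0 := hnbr hax
          have hyv0 : y ≠ v0 := hnbr hay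
          have := le_sum4 f hwv0.symm hxv0.symm hyv0.symm hxw.symm hyw.symm hxy
          omega
      have hbv0 : (⟨w.1, w.2 + 1⟩ : Vt r) ≠ v0 := ne_of_fst (by rw [hv0i]; exact hwi)
      have hcv0 : (⟨w.1, w.2 + 2⟩ : Vt r) ≠ v0 := ne_of_fst (by rw [hv0i]; exact hwi)
      by_cases hfb : f (⟨w.1, w.2 + 1⟩ : Vt r) = 0
      · exact keyA2 ⟨w.1, w.2 + 1⟩ rfl hfb
      by_cases hfc : f (⟨w.1, w.2 + 2⟩ : Vt r) = 0
      · exact keyA2 ⟨w.1, w.2 + 2⟩ rfl hfc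
      · have := le_sum4 f hwv0.symm hbv0.symm hcv0.symm
          (Ne.symm (pm1_ne w)) (Ne.symm (pm2_ne w)) (pm1_ne_pm2 w)
        omega
  · push_neg at h3
    by_cases h0e : ∃ v : Vt r, v ≠ v0 ∧ f v = 0
    · obtain ⟨v, hvv0, hfv⟩ := h0e
      rcases h0 v hfv with ⟨x, hadj, hx3⟩ | ⟨x, y, hax, hay, hxy, hx2, hy2⟩
      · exact absurd hx3 (h3 x (hnbr hadj))
      have hxv0 : x ≠ v0 := hnbr hax
      have hyv0 : y ≠ v0 := hnbr hay
      by_cases hxy1 : x.1 = y.1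
      · by_cases hxi : x.1 = i0
        · -- x, y are v1 and v2 in some order
          have hy12 := hpart0 y (by rw [← hxy1]; exact hxi) hyv0
          have hx12 := hpart0 x hxi hxv0
          have hfv1 : f v1 = 2 := by
            rcases hx12 with e | e
            · rw [← e]; exact hx2
            · rcases hy12 with e' | e'
              · rw [← e']; exact hy2
              · exact absurd (e.trans e'.symm) hxy
          by_cases hw0f : f w0 = 0
          · rcases h0 w0 hw0f with ⟨x', hadj', hx3'⟩ | ⟨u1, u2, hau1, hau2, hu12, hu1, hu2⟩
            · exact absurd hx3' (h3 x' (hnbr hadj'))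
            · have hu1v0 : u1 ≠ v0 := hnbr hau1
              have hu2v0 : u2 ≠ v0 := hnbr hau2
              have hu1v1 : u1 ≠ v1 := fun e => hA2 (by rw [← e]; exact hau1)
              have hu2v1 : u2 ≠ v1 := fun e => hA2 (by rw [← e]; exact hau2)
              have := le_sum4 f hv0v1 hu1v0.symm hu2v0.symm hu1v1.symm hu2v1.symm hu12
              omega
          · have hxw0 : x ≠ w0 := ne_of_fst (by rw [hxi, hw0i]; exact hi01)
            have hyw0 : y ≠ w0 := ne_of_fst (by rw [← hxy1, hxi, hw0i]; exact hi01)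
            have hv0w0 : v0 ≠ w0 := hw0v0.symm
            have := le_sum4 f hxv0.symm hyv0.symm hv0w0 hxy hxw0 hyw0
            omega
        · -- same part, not part 0: use the third vertex of that part
          have hx2y2 : x.2 ≠ y.2 := by
            intro e
            exact hxy (Sigma.ext hxy1 (heq_of_eq e))
          have htx : (⟨x.1, -x.2 - y.2⟩ : Vt r) ≠ x := by
            conv_rhs => rw [show x = (⟨x.1, x.2⟩ : Vt r) from rfl]
            exact mk_ne_of_snd (fin3_third x.2 y.2 hx2y2).1
          have hty : (⟨x.1, -x.2 - y.2⟩ : Vt r) ≠ y := by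
            intro e
            rw [eq_mk_of_fst hxy1.symm] at e
            exact (fin3_third x.2 y.2 hx2y2).2 (by simpa [Sigma.ext_iff] using e)
          have htv0 : (⟨x.1, -x.2 - y.2⟩ : Vt r) ≠ v0 := ne_of_fst (by rw [hv0i]; exact hxi)
          by_cases hft : f (⟨x.1, -x.2 - y.2⟩ : Vt r) = 0
          · rcases h0 _ hft with ⟨x', hadj', hx3'⟩ | ⟨u1, u2, hau1, hau2, hu12, hu1, hu2⟩
            · exact absurd hx3' (h3 x' (hnbr hadj'))
            · have hu1x : u1 ≠ x := ne_of_fst (fun c => (hadj1 hau1) c.symm)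
              have hu2x : u2 ≠ x := ne_of_fst (fun c => (hadj1 hau2) c.symm)
              have hu1v0 : u1 ≠ v0 := hnbr hau1
              have hu2v0 : u2 ≠ v0 := hnbr hau2
              have := le_sum4 f hxv0.symm hu1v0.symm hu2v0.symm hu1x.symm hu2x.symm hu12
              omega
          · have := le_sum4 f hxv0.symm hyv0.symm htv0.symm hxy
              (Ne.symm htx) (Ne.symm hty)
            omega
      · -- the two 2s lie in different parts
        have keyB : ∀ x' y' : Vt r, f x' = 2 → f y' = 2 → ¬ x'.1 = i0 → x'.1 ≠ y'.1 →
            y' ≠ v0 → 7 ≤ ∑ v, f v := by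
          intro x' y' hx' hy' hx'i hx'y' hy'v0
          have hx'v0 : x' ≠ v0 := ne_of_fst (by rw [hv0i]; exact hx'i)
          have keyB0 : ∀ t : Vt r, t.1 = x'.1 → f t = 0 → 7 ≤ ∑ v, f v := by
            intro t ht hft
            rcases h0 t hft with ⟨x'', hadj, h3'⟩ | ⟨u1, u2, ha1, ha2, h12, hu1, hu2⟩
            · exact absurd h3' (h3 _ (hnbr hadj))
            · have hu1x : u1 ≠ x' := ne_of_fst (fun c => (hadj1 ha1) (ht.trans c.symm))
              have hu2x : u2 ≠ x' := ne_of_fst (fun c => (hadj1 ha2) (ht.trans c.symm))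
              have hu1v0 : u1 ≠ v0 := hnbr ha1
              have hu2v0 : u2 ≠ v0 := hnbr ha2
              have := le_sum4 f hx'v0.symm hu1v0.symm hu2v0.symm hu1x.symm hu2x.symm h12
              omega
          by_cases hb1 : f (⟨x'.1, x'.2 + 1⟩ : Vt r) = 0
          · exact keyB0 ⟨x'.1, x'.2 + 1⟩ rfl hb1
          by_cases hb2 : f (⟨x'.1, x'.2 + 2⟩ : Vt r) = 0
          · exact keyB0 ⟨x'.1, x'.2 + 2⟩ rfl hb2
          · have hx1v0 : (⟨x'.1, x'.2 + 1⟩ : Vt r) ≠ v0 :=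
              ne_of_fst (by rw [hv0i]; exact hx'i)
            have hx2v0 : (⟨x'.1, x'.2 + 2⟩ : Vt r) ≠ v0 :=
              ne_of_fst (by rw [hv0i]; exact hx'i)
            have hy'x1 : y' ≠ (⟨x'.1, x'.2 + 1⟩ : Vt r) := ne_of_fst (fun c => hx'y' c.symm)
            have hy'x2 : y' ≠ (⟨x'.1, x'.2 + 2⟩ : Vt r) := ne_of_fst (fun c => hx'y' c.symm)
            have := le_sum5 f hx'v0.symm hy'v0.symm hx1v0.symm hx2v0.symm (ne_of_fst hx'y')
              (Ne.symm (pm1_ne x')) (Ne.symm (pm2_ne x')) hy'x1 hy'x2 (pm1_ne_pm2 x')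
            omega
        by_cases hxi : x.1 = i0
        · exact keyB y x hy2 hx2 (fun c => hxy1 (hxi.trans c.symm)) (fun e => hxy1 e.symm) hxv0
        · exact keyB x y hx2 hy2 hxi hxy1 hyv0
    · push_neg at h0e
      rw [← Finset.add_sum_erase _ (fun v => f v) (Finset.mem_univ v0)]
      have hge : ∀ v ∈ Finset.univ.erase v0, 1 ≤ f v := by
        intro v hv
        have := h0e v (Finset.ne_of_mem_erase hv)
        omega
      have hns := Finset.card_nsmul_le_sum _ (fun v => f v) 1 hge
      rw [Finset.card_erase_of_mem (Finset.mem_univ v0), univ_card] at hns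
      simp only [smul_eq_mul, mul_one] at hns
      omega
end Upper

section Main
variable {r : ℕ}

lemma gamma_KG (hr : 2 ≤ r) : gammaDR (KG r) = 6 := by
  have h0r : 0 < r := by omega
  have h1r : 1 < r := by omega
  set u : Vt r := ⟨⟨0, h0r⟩, 0⟩ with hu
  set w : Vt r := ⟨⟨1, h1r⟩, 0⟩ with hw
  have huw1 : u.1 ≠ w.1 := by
    rw [hu, hw]
    intro h
    simpa using congrArg Fin.val h
  apply le_antisymm
  · have hdr : IsDRDF (KG r) (fun v => if v = u ∨ v = w then 3 else 0) := by
      apply isDRDF_fA (KG r) u w (ne_of_fst huw1)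
      intro v hvu hvw
      by_cases hv1 : v.1 = u.1
      · exact ⟨w, adj_iff.mpr (by rw [hv1]; exact huw1), Or.inr rfl⟩
      · exact ⟨u, adj_iff.mpr hv1, Or.inl rfl⟩
    exact le_trans (gammaDR_le hdr) (le_of_eq (weight_fA u w (ne_of_fst huw1)))
  · exact le_gammaDR (six_le_weight hr)

/-- For every integer `r ≥ 2`, the complete `r`-partite graph all of whose
partite sets have size `3` satisfies `b_dR(K_{3,…,3}) = 3(r - 1) + 1`. -/
theorem completeMultipartite_bDR_threes (r : ℕ) (hr : 2 ≤ r) :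
    bDR (SimpleGraph.completeMultipartiteGraph fun _ : Fin r => Fin 3) = 3 * (r - 1) + 1 := by
  obtain ⟨Bs, hsubE, hcardBs, hseven⟩ := upper hr
  have hg6 : gammaDR (KG r) = 6 := gamma_KG hr
  have hmem : 3 * (r - 1) + 1 ∈ {k | ∃ B : Finset (Sym2 (Vt r)), ↑B ⊆ (KG r).edgeSet ∧
      B.card = k ∧ gammaDR (KG r) < gammaDR ((KG r).deleteEdges ↑B)} := by
    refine ⟨Bs, hsubE, hcardBs, ?_⟩
    rw [hg6]
    have h7 : 7 ≤ gammaDR ((KG r).deleteEdges ↑Bs) := le_gammaDR (hseven)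
    omega
  have hlow : ∀ k ∈ {k | ∃ B : Finset (Sym2 (Vt r)), ↑B ⊆ (KG r).edgeSet ∧
      B.card = k ∧ gammaDR (KG r) < gammaDR ((KG r).deleteEdges ↑B)},
      3 * (r - 1) + 1 ≤ k := by
    rintro k ⟨B, hs, hc, hlt⟩
    by_contra hc'
    have hble : B.card ≤ 3 * (r - 1) := by omega
    obtain ⟨f, hf, hwt⟩ := core hr B hs hble
    have : gammaDR ((KG r).deleteEdges ↑B) ≤ 6 := by
      rw [← hwt]
      exact gammaDR_le hf
    rw [hg6] at hlt
    omega
  exact le_antisymm (Nat.sInf_le hmem) (le_csInf ⟨_, hmem⟩ hlow)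
end Main
end Core
end

section
/- Let G be a finite simple graph and let x, y, z be three distinct vertices such that xy and yz are edges of G (i.e., xyz is a path of length 2 in G). Then b_dR(G) ≤ deg(x) + deg(y) + deg(z) − 3 − |N(x) ∩ N(y)|. -/
section

open Finset SimpleGraph

variable {V : Type*}

lemma exists_isDRDF_sum_eq_gammaDR [Fintype V] (G : SimpleGraph V) :
    ∃ f, IsDRDF G f ∧ ∑ v, f v = gammaDR G :=
  Nat.sInf_mem (s := {k | ∃ f : V → ℕ, IsDRDF G f ∧ ∑ v, f v = k})
    ⟨_, fun _ => 3, ⟨fun _ => le_rfl, fun _ h => by simp at h, fun _ h => by simp at h⟩, rfl⟩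

lemma gammaDR_le_sum [Fintype V] {G : SimpleGraph V} {f : V → ℕ} (hf : IsDRDF G f) :
    gammaDR G ≤ ∑ v, f v :=
  Nat.sInf_le ⟨f, hf, rfl⟩

lemma bDR_le_card [Fintype V] {G : SimpleGraph V} {B : Finset (Sym2 V)} (hB : ↑B ⊆ G.edgeSet)
    (h : gammaDR G < gammaDR (G.deleteEdges ↑B)) : bDR G ≤ #B :=
  Nat.sInf_le ⟨B, hB, rfl, h⟩

namespace IsDRDF

variable {G H : SimpleGraph V} {f : V → ℕ}

lemma two_le_of_forall_not_adj (hf : IsDRDF G f) {z : V} (hz : ∀ w, ¬ G.Adj z w) : 2 ≤ f z := by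
  obtain ⟨-, hf0, hf1⟩ := hf
  by_contra! h
  rcases Nat.lt_succ_iff.1 h |>.eq_or_lt with h1 | h0
  · obtain ⟨w, hw, -⟩ := hf1 z h1
    exact hz w hw
  · rcases hf0 z (by omega) with ⟨w, hw, -⟩ | ⟨w, -, hw, -⟩
    all_goals exact hz w hw

lemma two_le_add_of_forall_adj_eq (hf : IsDRDF G f) {x y : V} (hy : ∀ w, G.Adj y w → w = x) :
    2 ≤ f x + f y := by
  obtain ⟨-, hf0, hf1⟩ := hf
  rcases Nat.lt_or_ge (f y) 2 with h | h
  · rcases Nat.lt_succ_iff.1 h |>.eq_or_lt with h1 | h0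
    · obtain ⟨w, hw, hw2⟩ := hf1 y h1
      rw [hy w hw] at hw2
      omega
    · rcases hf0 y (by omega) with ⟨w, hw, hw3⟩ | ⟨w₁, w₂, hw₁, hw₂, hne, -⟩
      · rw [hy w hw] at hw3
        omega
      · exact absurd ((hy w₁ hw₁).trans (hy w₂ hw₂).symm) hne
  · omega

lemma of_le (hHG : H ≤ G) (hf : IsDRDF H f) {g : V → ℕ} (hg : ∀ v, g v ≤ 3)
    (hlow : ∀ v, g v ≤ 1 →
      (∃ w, G.Adj v w ∧ g w = 3) ∨ (g v = f v ∧ ∀ w, H.Adj v w → g w = f w)) :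
    IsDRDF G g := by
  obtain ⟨-, hf0, hf1⟩ := hf
  refine ⟨hg, fun v hv => ?_, fun v hv => ?_⟩
  · rcases hlow v (by omega) with h3 | ⟨hfv, hN⟩
    · exact Or.inl h3
    rcases hf0 v (hfv ▸ hv) with ⟨w, hw, hw3⟩ | ⟨w₁, w₂, hw₁, hw₂, hne, h₁, h₂⟩
    · exact Or.inl ⟨w, hHG hw, (hN w hw).trans hw3⟩
    · exact Or.inr ⟨w₁, w₂, hHG hw₁, hHG hw₂, hne, (hN w₁ hw₁).trans h₁, (hN w₂ hw₂).trans h₂⟩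
  · rcases hlow v (by omega) with ⟨w, hw, hw3⟩ | ⟨hfv, hN⟩
    · exact ⟨w, hw, by omega⟩
    obtain ⟨w, hw, hw2⟩ := hf1 v (hfv ▸ hv)
    exact ⟨w, hHG hw, (hN w hw).symm ▸ hw2⟩

end IsDRDF

section Concentrate

variable [DecidableEq V] {x y z : V} {f : V → ℕ}

lemma isDRDF_piecewise_single {G H : SimpleGraph V} (hHG : H ≤ G) (hf : IsDRDF H f)
    (hxy : G.Adj x y) (hyz : G.Adj y z) (hz : ∀ w, ¬ H.Adj z w) (hy : ∀ w, H.Adj y w → w = x)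
    (hx : ∀ w, H.Adj x w → w = y ∨ G.Adj y w) :
    IsDRDF G (({x, y, z} : Finset V).piecewise (Pi.single y 3) f) := by
  set t : Finset V := {x, y, z}
  have hout : ∀ v ∉ t, t.piecewise (Pi.single y 3) f v = f v := fun v hv =>
    t.piecewise_eq_of_notMem _ _ hv
  have hy3 : t.piecewise (Pi.single y 3) f y = 3 := by simp [t]
  have hle : Pi.single y 3 ≤ fun _ : V => 3 := fun v => by
    by_cases hv : v = y <;> simp [hv]
  refine hf.of_le hHG (fun v => t.piecewise_le_of_le_of_le hle hf.1 v) (fun v hv => ?_)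
  by_cases hvt : v ∈ t
  · simp only [t, mem_insert, mem_singleton] at hvt
    rcases hvt with rfl | rfl | rfl
    exacts [Or.inl ⟨y, hxy, hy3⟩, by omega, Or.inl ⟨y, hyz.symm, hy3⟩]
  by_cases hyv : G.Adj y v
  · exact Or.inl ⟨y, hyv.symm, hy3⟩
  refine Or.inr ⟨hout v hvt, fun w hw => hout w ?_⟩
  simp only [t, mem_insert, mem_singleton, not_or] at hvt ⊢
  refine ⟨?_, ?_, ?_⟩
  · rintro rfl
    rcases hx v hw.symm with rfl | h
    exacts [hvt.2.1 rfl, hyv h]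
  · rintro rfl
    exact hvt.1 (hy v hw.symm)
  · rintro rfl
    exact hz v hw.symm

lemma sum_piecewise_single_lt [Fintype V] (hxy : x ≠ y) (hyz : y ≠ z) (hxz : x ≠ z)
    (hfxy : 2 ≤ f x + f y) (hfz : 2 ≤ f z) :
    ∑ v, ({x, y, z} : Finset V).piecewise (Pi.single y 3) f v < ∑ v, f v := by
  set t : Finset V := {x, y, z}
  have hft : 4 ≤ ∑ v ∈ t, f v := by
    simp only [t, sum_insert, mem_insert, mem_singleton, hxy, hxz, hyz, or_self,
      not_false_eq_true, sum_singleton]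
    omega
  have hgt : ∑ v ∈ t, t.piecewise (Pi.single y 3) f v = 3 := by
    rw [sum_piecewise]
    simp [t]
  have hcompl : ∑ v ∈ tᶜ, t.piecewise (Pi.single y 3) f v = ∑ v ∈ tᶜ, f v :=
    sum_congr rfl fun v hv => t.piecewise_eq_of_notMem _ _ (mem_compl.1 hv)
  rw [← sum_add_sum_compl t, ← sum_add_sum_compl t f, hgt, hcompl]
  omega

end Concentrate

theorem gammaDR_lt_of_le_of_path [Fintype V] [DecidableEq V] {G H : SimpleGraph V}
    (hHG : H ≤ G) {x y z : V} (hxy : G.Adj x y) (hyz : G.Adj y z) (hxz : x ≠ z)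
    (hz : ∀ w, ¬ H.Adj z w) (hy : ∀ w, H.Adj y w → w = x) (hx : ∀ w, H.Adj x w → w = y ∨ G.Adj y w) :
    gammaDR G < gammaDR H := by
  obtain ⟨f, hf, hsum⟩ := exists_isDRDF_sum_eq_gammaDR H
  calc gammaDR G ≤ ∑ v, ({x, y, z} : Finset V).piecewise (Pi.single y 3) f v :=
        gammaDR_le_sum (isDRDF_piecewise_single hHG hf hxy hyz hz hy hx)
    _ < ∑ v, f v := sum_piecewise_single_lt hxy.ne hyz.ne hxz
        (hf.two_le_add_of_forall_adj_eq hy) (hf.two_le_of_forall_not_adj hz)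
    _ = gammaDR H := hsum

lemma SimpleGraph.mem_of_deleteEdges_adj {G : SimpleGraph V} {B : Set (Sym2 V)} {K : Finset V}
    {v w : V} (hB : ∀ u, G.Adj v u → u ∉ K → s(v, u) ∈ B) (h : (G.deleteEdges B).Adj v w) :
    w ∈ K := by
  rw [deleteEdges_adj] at h
  by_contra hw
  exact h.2 (hB w h.1 hw)

section PathCut

variable [Fintype V] [DecidableEq V] {G : SimpleGraph V} [DecidableRel G.Adj] {x y z : V}

variable (G) in
def pathCut (x y z : V) : Finset (Sym2 V) :=
  (G.neighborFinset x \ insert y (G.neighborFinset x ∩ G.neighborFinset y)).image (s(x, ·)) ∪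
    (G.neighborFinset y \ {x, z}).image (s(y, ·)) ∪ (G.neighborFinset z).image (s(z, ·))

lemma coe_image_mk_subset_edgeSet {v : V} {s : Finset V} (hs : s ⊆ G.neighborFinset v) :
    ↑(s.image (s(v, ·))) ⊆ G.edgeSet := by
  intro e he
  obtain ⟨w, hw, rfl⟩ := mem_image.1 he
  exact (G.mem_neighborFinset v w).1 (hs hw)

lemma pathCut_subset_edgeSet : ↑(pathCut G x y z) ⊆ G.edgeSet := by
  simp only [pathCut, coe_union]
  exact Set.union_subset (Set.union_subset (coe_image_mk_subset_edgeSet sdiff_subset)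
    (coe_image_mk_subset_edgeSet sdiff_subset)) (coe_image_mk_subset_edgeSet subset_rfl)

lemma card_pathCut_add_le (hxy : G.Adj x y) (hyz : G.Adj y z) (hxz : x ≠ z) :
    #(pathCut G x y z) + 3 + #(G.neighborFinset x ∩ G.neighborFinset y) ≤
      G.degree x + G.degree y + G.degree z := by
  set C := G.neighborFinset x ∩ G.neighborFinset y
  have hyC : y ∉ C := fun h => G.irrefl ((G.mem_neighborFinset y y).1 (mem_inter.1 h).2)
  have hX : #(G.neighborFinset x \ insert y C) + (#C + 1) = G.degree x := by
    rw [← card_insert_of_notMem hyC, card_sdiff_add_card_eq_card,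
      card_neighborFinset_eq_degree]
    exact insert_subset ((G.mem_neighborFinset x y).2 hxy) inter_subset_left
  have hY : #(G.neighborFinset y \ {x, z}) + 2 = G.degree y := by
    rw [← card_pair hxz, card_sdiff_add_card_eq_card, card_neighborFinset_eq_degree]
    exact insert_subset ((G.mem_neighborFinset y x).2 hxy.symm)
      (singleton_subset_iff.2 ((G.mem_neighborFinset y z).2 hyz))
  have hcard : #(pathCut G x y z) ≤ #(G.neighborFinset x \ insert y C) +
      #(G.neighborFinset y \ {x, z}) + #(G.neighborFinset z) :=
    (card_union_le _ _).trans <| add_le_add ((card_union_le _ _).trans <|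
      add_le_add card_image_le card_image_le) card_image_le
  rw [card_neighborFinset_eq_degree] at hcard
  omega

lemma not_deleteEdges_pathCut_adj_right (w : V) :
    ¬ (G.deleteEdges ↑(pathCut G x y z)).Adj z w := fun h =>
  notMem_empty w <| mem_of_deleteEdges_adj (fun u hu _ =>
    mem_union_right _ (mem_image_of_mem _ ((G.mem_neighborFinset z u).2 hu))) h

lemma eq_of_deleteEdges_pathCut_adj_middle {w : V}
    (h : (G.deleteEdges ↑(pathCut G x y z)).Adj y w) : w = x := by
  have hB : ∀ u, G.Adj y u → u ∉ ({x, z} : Finset V) → s(y, u) ∈ pathCut G x y z := fun u hu hK =>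
    mem_union_left _ (mem_union_right _
      (mem_image_of_mem _ (mem_sdiff.2 ⟨(G.mem_neighborFinset y u).2 hu, hK⟩)))
  rcases mem_insert.1 (mem_of_deleteEdges_adj hB h) with rfl | hwz
  · rfl
  · exact absurd h.symm (mem_singleton.1 hwz ▸ not_deleteEdges_pathCut_adj_right y)

lemma deleteEdges_pathCut_adj_left {w : V} (h : (G.deleteEdges ↑(pathCut G x y z)).Adj x w) :
    w = y ∨ G.Adj y w := by
  have hB : ∀ u, G.Adj x u → u ∉ insert y (G.neighborFinset x ∩ G.neighborFinset y) →
      s(x, u) ∈ pathCut G x y z := fun u hu hK =>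
    mem_union_left _ (mem_union_left _
      (mem_image_of_mem _ (mem_sdiff.2 ⟨(G.mem_neighborFinset x u).2 hu, hK⟩)))
  rcases mem_insert.1 (mem_of_deleteEdges_adj hB h) with hwy | hwC
  · exact Or.inl hwy
  · exact Or.inr ((G.mem_neighborFinset y w).1 (mem_inter.1 hwC).2)

end PathCut

end

/-- If `x y z` is a path of length `2` in `G`, then
`b_dR(G) ≤ deg(x) + deg(y) + deg(z) − 3 − |N(x) ∩ N(y)|`. -/
theorem bDR_le_of_path {V : Type*} [Fintype V] [DecidableEq V]
    (G : SimpleGraph V) [DecidableRel G.Adj] (x y z : V)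
    (hxy : G.Adj x y) (hyz : G.Adj y z) (hxz : x ≠ z) :
    (bDR G : ℤ) ≤ (G.degree x : ℤ) + G.degree y + G.degree z - 3 -
      (G.neighborFinset x ∩ G.neighborFinset y).card := by
  have hlt : gammaDR G < gammaDR (G.deleteEdges ↑(pathCut G x y z)) :=
    gammaDR_lt_of_le_of_path (G.deleteEdges_le _) hxy hyz hxz not_deleteEdges_pathCut_adj_right
      (fun _ => eq_of_deleteEdges_pathCut_adj_middle) (fun _ => deleteEdges_pathCut_adj_left)
  have hbDR := bDR_le_card pathCut_subset_edgeSet hlt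
  have hcard := card_pathCut_add_le hxy hyz hxz
  omega
end
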